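/- Assume that for every x ∈ ℝ^d and every k ∈ {1,…,d} the matrix (A(x)^{-1})^T ∂_k(A^{-1})(x) is symmetric. Then for all compactly supported smooth vector fields F, G : ℝ^d → ℝ^d one has ∫ (𝕃_A F)^T S G dμ = ∫ F^T S (𝕃_A G) dμ = − ∫ Σ_k (∂_k F)^T S (∂_k G) dμ; in particular ∫ (𝕃_A F)^T S F dμ ≤ 0. -/

import Mathlib

/-!
Write `B = A⁻¹`, `F̃ = B F`, `G̃ = B G`, so that `Fᵀ S G = F̃ ⬝ G̃`. The Leibniz rule for `L` gives
the conjugation identity `B 𝕃_A G = 𝕃 G̃ - (𝕃 B) G`, hence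
`Fᵀ S 𝕃_A G = F̃ ⬝ 𝕃 G̃ - ∑ F̃_p G_q L B_pq`. Each term is integrated by parts against `e^{-V}`
(`∫ u L v dμ = -∫ ∇u ⬝ ∇v dμ` for compactly supported `u`). Since `∂ₖF̃ = (∂ₖB) F + B ∂ₖF`, the
resulting first-order terms collapse to `∑ₖ (∂ₖF)ᵀ S ∂ₖG` exactly because `Bᵀ ∂ₖB` is
symmetric. That form is symmetric in `F, G` and nonnegative for `F = G`.
-/

open Real MeasureTheory Matrix

noncomputable section

abbrev Euc (d : ℕ) := Fin d → ℝ

/-- partial derivative in direction `i`. -/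
def pd {d : ℕ} (i : Fin d) (f : Euc d → ℝ) (x : Euc d) : ℝ :=
  fderiv ℝ f x (Pi.single i 1)

/-- Euclidean gradient. -/
def gradv {d : ℕ} (f : Euc d → ℝ) (x : Euc d) : Euc d := fun i => pd i f x

/-- The diffusion operator `L f = Δ f - ∇V ⋅ ∇f`. -/
def Lop {d : ℕ} (V f : Euc d → ℝ) (x : Euc d) : ℝ :=
  (∑ i, pd i (pd i f) x) - gradv V x ⬝ᵥ gradv f x

/-- Hessian matrix. -/
def hessM {d : ℕ} (V : Euc d → ℝ) (x : Euc d) : Matrix (Fin d) (Fin d) ℝ :=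
  Matrix.of fun i j => pd i (pd j V) x

/-- Componentwise application of `L` to a vector field. -/
def vecL {d : ℕ} (V : Euc d → ℝ) (F : Euc d → Euc d) (x : Euc d) : Euc d :=
  fun i => Lop V (fun y => F y i) x

/-- Entrywise application of `L` to a matrix field. -/
def matL {d : ℕ} (V : Euc d → ℝ) (M : Euc d → Matrix (Fin d) (Fin d) ℝ) (x : Euc d) :
    Matrix (Fin d) (Fin d) ℝ :=
  Matrix.of fun i j => Lop V (fun y => M y i j) x

/-- Jacobian matrix of a vector field: `(jac H x) i j = ∂_j H_i (x)`. -/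
def jac {d : ℕ} (H : Euc d → Euc d) (x : Euc d) : Matrix (Fin d) (Fin d) ℝ :=
  Matrix.of fun i j => pd j (fun y => H y i) x

/-- `(∇A⁻¹ ∇F)_i = ∑_{j,k} ∂_k (A⁻¹)_{i,j} ∂_k F_j`. -/
def gAinvG {d : ℕ} (A : Euc d → Matrix (Fin d) (Fin d) ℝ) (F : Euc d → Euc d) (x : Euc d) :
    Euc d :=
  fun i => ∑ j, ∑ k, pd k (fun y => (A y)⁻¹ i j) x * pd k (fun y => F y j) x

/-- The operator `𝕃_A F = 𝕃 F + 2 A ∇A⁻¹ ∇F`. -/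
def LA {d : ℕ} (V : Euc d → ℝ) (A : Euc d → Matrix (Fin d) (Fin d) ℝ) (F : Euc d → Euc d)
    (x : Euc d) : Euc d :=
  vecL V F x + (2 : ℝ) • (A x *ᵥ gAinvG A F x)

/-- The matrix field `M_A = A (∇²V) A⁻¹ - A (𝕃 A⁻¹)`. -/
def MA {d : ℕ} (V : Euc d → ℝ) (A : Euc d → Matrix (Fin d) (Fin d) ℝ) (x : Euc d) :
    Matrix (Fin d) (Fin d) ℝ :=
  A x * hessM V x * (A x)⁻¹ - A x * matL V (fun y => (A y)⁻¹) x

/-- The Schrödinger-type operator `𝕃_A^{M_A} F = 𝕃_A F - M_A F`. -/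
def LAM {d : ℕ} (V : Euc d → ℝ) (A : Euc d → Matrix (Fin d) (Fin d) ℝ) (F : Euc d → Euc d)
    (x : Euc d) : Euc d :=
  LA V A F x - MA V A x *ᵥ F x

/-- The matrix field `S = (A Aᵀ)⁻¹`. -/
def Smat {d : ℕ} (A : Euc d → Matrix (Fin d) (Fin d) ℝ) (x : Euc d) :
    Matrix (Fin d) (Fin d) ℝ :=
  (A x * (A x)ᵀ)⁻¹

/-- The probability measure with density proportional to `e^{-V}`. -/
def gibbs {d : ℕ} (V : Euc d → ℝ) : Measure (Euc d) :=
  (ENNReal.ofReal (∫ x, Real.exp (-V x)))⁻¹ •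
    MeasureTheory.volume.withDensity fun x => ENNReal.ofReal (Real.exp (-V x))

/-- Variance with respect to a measure. -/
def Var' {d : ℕ} (μ : Measure (Euc d)) (f : Euc d → ℝ) : ℝ :=
  (∫ x, f x ^ 2 ∂μ) - (∫ x, f x ∂μ) ^ 2


open scoped ContDiff

section Calculus

variable {d : ℕ}

theorem ContDiff.pd {f : Euc d → ℝ} (hf : ContDiff ℝ ∞ f) (i : Fin d) : ContDiff ℝ ∞ (pd i f) :=
  (hf.fderiv_right (m := ∞) le_rfl).clm_apply contDiff_const

theorem ContDiff.Lop {V v : Euc d → ℝ} (hV : ContDiff ℝ ∞ V) (hv : ContDiff ℝ ∞ v) :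
    ContDiff ℝ ∞ (Lop V v) :=
  (ContDiff.sum fun i _ => (hv.pd i).pd i).sub (ContDiff.sum fun i _ => (hV.pd i).mul (hv.pd i))

theorem HasCompactSupport.gradv_dotProduct {u : Euc d → ℝ} (hu : HasCompactSupport u)
    (w : Euc d → Euc d) : HasCompactSupport fun x => gradv u x ⬝ᵥ w x :=
  (hu.fderiv (𝕜 := ℝ)).mono fun x hx h0 => hx <| by
    simp [dotProduct, gradv, pd, h0]

theorem pd_mul {u v : Euc d → ℝ} {x : Euc d} (i : Fin d)
    (hu : DifferentiableAt ℝ u x) (hv : DifferentiableAt ℝ v x) :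
    pd i (fun y => u y * v y) x = pd i u x * v x + u x * pd i v x := by
  simp only [pd, fderiv_fun_mul hu hv, _root_.add_apply, _root_.smul_apply, smul_eq_mul]
  ring

theorem pd_sum {ι : Type*} (s : Finset ι) {f : ι → Euc d → ℝ} {x : Euc d} (i : Fin d)
    (hf : ∀ j ∈ s, DifferentiableAt ℝ (f j) x) :
    pd i (fun y => ∑ j ∈ s, f j y) x = ∑ j ∈ s, pd i (f j) x := by
  simp [pd, fderiv_fun_sum hf]

theorem pd_add {u v : Euc d → ℝ} {x : Euc d} (i : Fin d)
    (hu : DifferentiableAt ℝ u x) (hv : DifferentiableAt ℝ v x) :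
    pd i (fun y => u y + v y) x = pd i u x + pd i v x := by
  simp [pd, fderiv_fun_add hu hv]

theorem pd_neg (i : Fin d) (f : Euc d → ℝ) (x : Euc d) : pd i (fun y => -f y) x = -pd i f x := by
  simp [pd, fderiv_fun_neg]

theorem pd_exp_neg {V : Euc d → ℝ} {x : Euc d} (i : Fin d) (hV : DifferentiableAt ℝ V x) :
    pd i (fun y => exp (-V y)) x = -pd i V x * exp (-V x) := by
  rw [pd, fderiv_exp hV.fun_neg, fderiv_fun_neg]
  simp [pd, mul_comm]

end Calculus

section Diffusion

variable {d : ℕ}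

theorem Lop_mul {V u v : Euc d → ℝ} (hu : ContDiff ℝ ∞ u) (hv : ContDiff ℝ ∞ v) (x : Euc d) :
    Lop V (fun y => u y * v y) x
      = u x * Lop V v x + v x * Lop V u x + 2 * (gradv u x ⬝ᵥ gradv v x) := by
  have hpd (k : Fin d) : pd k (fun y => u y * v y) = fun y => pd k u y * v y + u y * pd k v y :=
    funext fun y => pd_mul k (hu.differentiable (by simp) y) (hv.differentiable (by simp) y)
  have hpd2 (k : Fin d) : pd k (pd k fun y => u y * v y) x
      = pd k (pd k u) x * v x + 2 * (pd k u x * pd k v x) + u x * pd k (pd k v) x := by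
    rw [hpd, pd_add k (((hu.pd k).mul hv).differentiable (by simp) x)
      ((hu.mul (hv.pd k)).differentiable (by simp) x),
      pd_mul k ((hu.pd k).differentiable (by simp) x) (hv.differentiable (by simp) x),
      pd_mul k (hu.differentiable (by simp) x) ((hv.pd k).differentiable (by simp) x)]
    ring
  simp only [Lop, gradv, dotProduct, hpd2]
  simp only [hpd, mul_sub, Finset.mul_sum, ← Finset.sum_sub_distrib,
    ← Finset.sum_add_distrib]
  exact Finset.sum_congr rfl fun k _ => by ring

theorem Lop_sum {ι : Type*} (s : Finset ι) {V : Euc d → ℝ} {f : ι → Euc d → ℝ}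
    (hf : ∀ j ∈ s, ContDiff ℝ ∞ (f j)) (x : Euc d) :
    Lop V (fun y => ∑ j ∈ s, f j y) x = ∑ j ∈ s, Lop V (f j) x := by
  have hpd (k : Fin d) : pd k (fun y => ∑ j ∈ s, f j y) = fun y => ∑ j ∈ s, pd k (f j) y :=
    funext fun y => pd_sum s k fun j hj => (hf j hj).differentiable (by simp) y
  simp only [Lop, gradv, dotProduct, hpd,
    pd_sum s _ fun j hj => ((hf j hj).pd _).differentiable (by simp) x, Finset.mul_sum]
  rw [Finset.sum_comm, Finset.sum_comm (s := Finset.univ), ← Finset.sum_sub_distrib]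

theorem exp_neg_mul_Lop {V v : Euc d → ℝ} (hV : ContDiff ℝ ∞ V) (hv : ContDiff ℝ ∞ v)
    (x : Euc d) :
    exp (-V x) * Lop V v x = ∑ k, pd k (fun y => pd k v y * exp (-V y)) x := by
  have hexp : ContDiff ℝ ∞ fun y => exp (-V y) := contDiff_exp.comp hV.neg
  simp only [Lop, gradv, dotProduct, mul_sub, Finset.mul_sum, ← Finset.sum_sub_distrib]
  refine Finset.sum_congr rfl fun k _ => ?_
  rw [pd_mul k ((hv.pd k).differentiable (by simp) x) (hexp.differentiable (by simp) x),
    pd_exp_neg k (hV.differentiable (by simp) x)]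
  ring

end Diffusion

section IntegrationByParts

variable {d : ℕ}

theorem integral_mul_pd {u g : Euc d → ℝ} (hu : ContDiff ℝ 1 u) (hcu : HasCompactSupport u)
    (hg : ContDiff ℝ 1 g) (k : Fin d) :
    ∫ x, u x * pd k g x = -∫ x, pd k u x * g x := by
  have hpd {f : Euc d → ℝ} (hf : ContDiff ℝ 1 f) : Continuous (pd k f) :=
    (hf.continuous_fderiv one_ne_zero).clm_apply continuous_const
  exact integral_mul_fderiv_eq_neg_fderiv_mul_of_integrable
    (((hpd hu).mul hg.continuous).integrable_of_hasCompactSupport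
      (hcu.fderiv_apply (𝕜 := ℝ) _).mul_right)
    ((hu.continuous.mul (hpd hg)).integrable_of_hasCompactSupport hcu.mul_right)
    ((hu.continuous.mul hg.continuous).integrable_of_hasCompactSupport hcu.mul_right)
    (fun x _ => hu.differentiable one_ne_zero x) (fun x _ => hg.differentiable one_ne_zero x)

theorem integral_exp_neg_mul_mul_Lop {V u v : Euc d → ℝ} (hV : ContDiff ℝ ∞ V)
    (hu : ContDiff ℝ ∞ u) (hcu : HasCompactSupport u) (hv : ContDiff ℝ ∞ v) :
    ∫ x, exp (-V x) * (u x * Lop V v x) = -∫ x, exp (-V x) * (gradv u x ⬝ᵥ gradv v x) := by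
  set w : Fin d → Euc d → ℝ := fun k y => pd k v y * exp (-V y)
  have hw (k : Fin d) : ContDiff ℝ ∞ (w k) := (hv.pd k).mul (contDiff_exp.comp hV.neg)
  have hint (k : Fin d) : Integrable fun x => u x * pd k (w k) x :=
    (hu.continuous.mul ((hw k).pd k).continuous).integrable_of_hasCompactSupport hcu.mul_right
  have hint' (k : Fin d) : Integrable fun x => pd k u x * w k x :=
    ((hu.pd k).continuous.mul (hw k).continuous).integrable_of_hasCompactSupport
      (hcu.fderiv_apply (𝕜 := ℝ) _).mul_right
  calc ∫ x, exp (-V x) * (u x * Lop V v x) = ∫ x, ∑ k, u x * pd k (w k) x := by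
        congr 1 with x
        rw [← Finset.mul_sum, ← exp_neg_mul_Lop hV hv]
        ring
    _ = ∑ k, -∫ x, pd k u x * w k x := by
        rw [integral_finsetSum _ fun k _ => hint k]
        exact Finset.sum_congr rfl fun k _ => integral_mul_pd (hu.of_le (by simp)) hcu
          ((hw k).of_le (by simp)) k
    _ = -∫ x, exp (-V x) * (gradv u x ⬝ᵥ gradv v x) := by
        rw [Finset.sum_neg_distrib, ← integral_finsetSum _ fun k _ => hint' k]
        simp only [w, gradv, dotProduct, Finset.mul_sum]
        congr 1; congr 1; ext x
        exact Finset.sum_congr rfl fun k _ => by ring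

theorem integral_exp_neg_mul_sum_mul_Lop {ι : Type*} [Fintype ι] {V : Euc d → ℝ}
    {u v : ι → Euc d → ℝ} (hV : ContDiff ℝ ∞ V) (hu : ∀ i, ContDiff ℝ ∞ (u i))
    (hcu : ∀ i, HasCompactSupport (u i)) (hv : ∀ i, ContDiff ℝ ∞ (v i)) :
    ∫ x, exp (-V x) * ∑ i, u i x * Lop V (v i) x
      = -∫ x, exp (-V x) * ∑ i, gradv (u i) x ⬝ᵥ gradv (v i) x := by
  have hexp : Continuous fun x => exp (-V x) := (contDiff_exp.comp hV.neg).continuous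
  have hint (i : ι) : Integrable fun x => exp (-V x) * (u i x * Lop V (v i) x) :=
    (hexp.mul ((hu i).continuous.mul ((hV.Lop (hv i)).continuous))).integrable_of_hasCompactSupport
      (hcu i).mul_right.mul_left
  have hint' (i : ι) : Integrable fun x => exp (-V x) * (gradv (u i) x ⬝ᵥ gradv (v i) x) :=
    (hexp.mul (continuous_finsetSum _ fun k _ =>
      ((hu i).pd k).continuous.mul ((hv i).pd k).continuous)).integrable_of_hasCompactSupport
        ((hcu i).gradv_dotProduct _).mul_left
  simp only [Finset.mul_sum]
  rw [integral_finsetSum _ fun i _ => hint i, integral_finsetSum _ fun i _ => hint' i,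
    ← Finset.sum_neg_distrib]
  exact Finset.sum_congr rfl fun i _ => integral_exp_neg_mul_mul_Lop hV (hu i) (hcu i) (hv i)

end IntegrationByParts

section MatrixFields

variable {d : ℕ}

section
attribute [local instance] Matrix.linftyOpNormedRing Matrix.linftyOpNormedAlgebra

theorem contDiff_inv_apply {A : Euc d → Matrix (Fin d) (Fin d) ℝ}
    (hA : ∀ i j, ContDiff ℝ ∞ fun x => A x i j) (hAinv : ∀ x, IsUnit (A x).det) (i j : Fin d) :
    ContDiff ℝ ∞ fun x => (A x)⁻¹ i j := by
  have hAm : ContDiff ℝ ∞ A := by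
    have : A = fun x => ∑ i, ∑ j, A x i j • Matrix.single i j (1 : ℝ) := by
      funext x; simpa [Matrix.smul_single] using Matrix.matrix_eq_sum_single (A x)
    rw [this]
    exact ContDiff.sum fun i _ => ContDiff.sum fun j _ => (hA i j).smul contDiff_const
  have hinv : ContDiff ℝ ∞ fun x => (A x)⁻¹ := by
    simp only [Matrix.nonsing_inv_eq_ringInverse]
    refine contDiff_iff_contDiffAt.2 fun x => ?_
    obtain ⟨u, hu⟩ := (Matrix.isUnit_iff_isUnit_det _).2 (hAinv x)
    exact (hu ▸ contDiffAt_ringInverse ℝ u).comp x hAm.contDiffAt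
  exact (Matrix.entryLinearMap ℝ ℝ i j).toContinuousLinearMap.contDiff.comp hinv

end

theorem mulVec_dotProduct_mulVec {R m n o : Type*} [CommSemiring R] [Fintype m] [Fintype n]
    [Fintype o] (M : Matrix m n R) (N : Matrix m o R) (a : n → R) (b : o → R) :
    (M *ᵥ a) ⬝ᵥ (N *ᵥ b) = a ⬝ᵥ ((Mᵀ * N) *ᵥ b) := by
  rw [← Matrix.vecMul_transpose, dotProduct_mulVec, Matrix.vecMul_vecMul, ← dotProduct_mulVec]

theorem dotProduct_Smat_mulVec (A : Euc d → Matrix (Fin d) (Fin d) ℝ) (x a b : Euc d) :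
    a ⬝ᵥ (Smat A x *ᵥ b) = ((A x)⁻¹ *ᵥ a) ⬝ᵥ ((A x)⁻¹ *ᵥ b) := by
  rw [mulVec_dotProduct_mulVec, Smat, Matrix.mul_inv_rev, Matrix.transpose_nonsing_inv]

theorem dotProduct_Smat_comm (A : Euc d → Matrix (Fin d) (Fin d) ℝ) (x a b : Euc d) :
    a ⬝ᵥ (Smat A x *ᵥ b) = b ⬝ᵥ (Smat A x *ᵥ a) := by
  rw [dotProduct_Smat_mulVec, dotProduct_Smat_mulVec, dotProduct_comm]

theorem dotProduct_Smat_self_nonneg (A : Euc d → Matrix (Fin d) (Fin d) ℝ) (x a : Euc d) :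
    0 ≤ a ⬝ᵥ (Smat A x *ᵥ a) := by
  rw [dotProduct_Smat_mulVec]
  exact Finset.sum_nonneg fun i _ => mul_self_nonneg _

/-- Read with `β' = ∂β`, `φ' = ∂φ`, `γ' = ∂γ`: the left side is `∂(βφ) ⬝ ∂(βγ)` minus the terms
produced by integrating `∂(βφ)_p γ_q` and `(βφ)_p ∂γ_q` against `∂β_pq`. -/
theorem dotProduct_leibniz_of_isSymm {R n : Type*} [CommRing R] [Fintype n]
    {β β' : Matrix n n R} (hsym : (βᵀ * β').IsSymm) (φ φ' γ γ' : n → R) :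
    (β' *ᵥ φ + β *ᵥ φ') ⬝ᵥ (β' *ᵥ γ + β *ᵥ γ')
      - ((β' *ᵥ φ + β *ᵥ φ') ⬝ᵥ (β' *ᵥ γ) + (β *ᵥ φ) ⬝ᵥ (β' *ᵥ γ'))
      = (β *ᵥ φ') ⬝ᵥ (β *ᵥ γ') := by
  have hswap : β'ᵀ * β = βᵀ * β' := by
    rw [← hsym, Matrix.transpose_mul, Matrix.transpose_transpose]
  simp only [dotProduct_add, add_dotProduct]
  rw [mulVec_dotProduct_mulVec β' β φ γ', mulVec_dotProduct_mulVec β β' φ γ', hswap]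
  ring

end MatrixFields

section Conjugation

variable {d : ℕ} {V : Euc d → ℝ} {A : Euc d → Matrix (Fin d) (Fin d) ℝ}

theorem inv_mulVec_LA (hA : ∀ i j, ContDiff ℝ ∞ fun x => A x i j)
    (hAinv : ∀ x, IsUnit (A x).det) {G : Euc d → Euc d} (hG : ContDiff ℝ ∞ G) (x : Euc d) :
    (A x)⁻¹ *ᵥ LA V A G x
      = vecL V (fun y => (A y)⁻¹ *ᵥ G y) x - matL V (fun y => (A y)⁻¹) x *ᵥ G x := by
  have hB := contDiff_inv_apply hA hAinv
  have hGj (j : Fin d) : ContDiff ℝ ∞ fun y => G y j := (contDiff_apply ℝ ℝ j).comp hG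
  ext p
  have hLop : Lop V (fun y => ((A y)⁻¹ *ᵥ G y) p) x = ∑ q, ((A x)⁻¹ p q * Lop V (G · q) x
      + G x q * Lop V (fun y => (A y)⁻¹ p q) x
      + 2 * (gradv (fun y => (A y)⁻¹ p q) x ⬝ᵥ gradv (G · q) x)) := by
    rw [show (fun y => ((A y)⁻¹ *ᵥ G y) p) = fun y => ∑ q, (A y)⁻¹ p q * G y q from rfl,
      Lop_sum _ fun q _ => (hB p q).mul (hGj q)]
    exact Finset.sum_congr rfl fun q _ => Lop_mul (hB p q) (hGj q) x
  rw [LA, Matrix.mulVec_add, Matrix.mulVec_smul, Matrix.mulVec_mulVec,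
    Matrix.nonsing_inv_mul _ (hAinv x), Matrix.one_mulVec]
  simp only [Pi.add_apply, Pi.sub_apply, Pi.smul_apply, smul_eq_mul, vecL]
  rw [hLop]
  simp only [vecL, matL, gAinvG, gradv, Matrix.mulVec, dotProduct, Matrix.of_apply,
    Finset.sum_add_distrib, Finset.mul_sum, mul_comm (G x _)]
  ring

theorem pd_mulVec {B : Euc d → Matrix (Fin d) (Fin d) ℝ} {F : Euc d → Euc d} {x : Euc d}
    (hB : ∀ i j, DifferentiableAt ℝ (fun y => B y i j) x)
    (hF : ∀ j, DifferentiableAt ℝ (fun y => F y j) x) (k : Fin d) :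
    (fun i => pd k (fun y => (B y *ᵥ F y) i) x)
      = (Matrix.of fun i j => pd k (fun y => B y i j) x) *ᵥ F x
        + B x *ᵥ fun j => pd k (fun y => F y j) x := by
  ext i
  rw [show (fun y => (B y *ᵥ F y) i) = fun y => ∑ j, B y i j * F y j from rfl,
    pd_sum (f := fun j y => B y i j * F y j) _ k fun j _ => (hB i j).mul (hF j)]
  simp only [pd_mul k (hB i _) (hF _), Finset.sum_add_distrib, Pi.add_apply, Matrix.mulVec,
    dotProduct, Matrix.of_apply]

theorem pd_dotProduct_Smat_pd (hA : ∀ i j, ContDiff ℝ ∞ fun x => A x i j)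
    (hAinv : ∀ x, IsUnit (A x).det) {F G : Euc d → Euc d} (hF : ContDiff ℝ ∞ F)
    (hG : ContDiff ℝ ∞ G) (x : Euc d) (k : Fin d)
    (hsym : (((A x)⁻¹)ᵀ * Matrix.of fun i j => pd k (fun y => (A y)⁻¹ i j) x).IsSymm) :
    (fun i => pd k (fun y => F y i) x) ⬝ᵥ (Smat A x *ᵥ fun i => pd k (fun y => G y i) x)
      = ∑ p, pd k (fun y => ((A y)⁻¹ *ᵥ F y) p) x * pd k (fun y => ((A y)⁻¹ *ᵥ G y) p) x
        - ∑ p, ∑ q, (pd k (fun y => ((A y)⁻¹ *ᵥ F y) p) x * G x q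
            + ((A x)⁻¹ *ᵥ F x) p * pd k (fun y => G y q) x) * pd k (fun y => (A y)⁻¹ p q) x := by
  have hB (i j : Fin d) : DifferentiableAt ℝ (fun y => (A y)⁻¹ i j) x :=
    (contDiff_inv_apply hA hAinv i j).differentiable (by simp) x
  have hFj (j : Fin d) : DifferentiableAt ℝ (fun y => F y j) x :=
    ((contDiff_apply ℝ ℝ j).comp hF).differentiable (by simp) x
  have hGj (j : Fin d) : DifferentiableAt ℝ (fun y => G y j) x :=
    ((contDiff_apply ℝ ℝ j).comp hG).differentiable (by simp) x
  rw [dotProduct_Smat_mulVec, ← dotProduct_leibniz_of_isSymm hsym, ← pd_mulVec hB hFj,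
    ← pd_mulVec hB hGj]
  simp only [dotProduct, Matrix.mulVec, Matrix.of_apply, Finset.mul_sum, ← Finset.sum_add_distrib]
  congr 1
  exact Finset.sum_congr rfl fun p _ => Finset.sum_congr rfl fun q _ => by ring

end Conjugation

section Symmetry

variable {d : ℕ} {V : Euc d → ℝ} {A : Euc d → Matrix (Fin d) (Fin d) ℝ}

theorem contDiff_inv_mulVec_apply (hA : ∀ i j, ContDiff ℝ ∞ fun x => A x i j)
    (hAinv : ∀ x, IsUnit (A x).det) {H : Euc d → Euc d} (hH : ContDiff ℝ ∞ H) (p : Fin d) :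
    ContDiff ℝ ∞ fun y => ((A y)⁻¹ *ᵥ H y) p :=
  (ContDiff.sum (s := Finset.univ) fun j _ =>
    (contDiff_inv_apply hA hAinv p j).mul ((contDiff_apply ℝ ℝ j).comp hH) :)

/-- `F ⬝ S 𝕃_A G = A⁻¹F ⬝ 𝕃(A⁻¹G) - ∑ (A⁻¹F)_p G_q L(A⁻¹)_pq` is `∑ᵢ uᵢ L vᵢ` with
`u = ibpLeft A F G` and `v = ibpRight A G`, so one integration by parts handles both terms. -/
def ibpLeft (A : Euc d → Matrix (Fin d) (Fin d) ℝ) (F G : Euc d → Euc d) :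
    Fin d ⊕ Fin d × Fin d → Euc d → ℝ :=
  Sum.elim (fun p y => ((A y)⁻¹ *ᵥ F y) p) fun pq y => -(((A y)⁻¹ *ᵥ F y) pq.1 * G y pq.2)

def ibpRight (A : Euc d → Matrix (Fin d) (Fin d) ℝ) (G : Euc d → Euc d) :
    Fin d ⊕ Fin d × Fin d → Euc d → ℝ :=
  Sum.elim (fun p y => ((A y)⁻¹ *ᵥ G y) p) fun pq y => (A y)⁻¹ pq.1 pq.2

theorem contDiff_ibpLeft (hA : ∀ i j, ContDiff ℝ ∞ fun x => A x i j)
    (hAinv : ∀ x, IsUnit (A x).det) {F G : Euc d → Euc d} (hF : ContDiff ℝ ∞ F)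
    (hG : ContDiff ℝ ∞ G) : ∀ i, ContDiff ℝ ∞ (ibpLeft A F G i)
  | .inl p => contDiff_inv_mulVec_apply hA hAinv hF p
  | .inr (p, q) => ((contDiff_inv_mulVec_apply hA hAinv hF p).mul
      ((contDiff_apply ℝ ℝ q).comp hG)).neg

theorem contDiff_ibpRight (hA : ∀ i j, ContDiff ℝ ∞ fun x => A x i j)
    (hAinv : ∀ x, IsUnit (A x).det) {G : Euc d → Euc d} (hG : ContDiff ℝ ∞ G) :
    ∀ i, ContDiff ℝ ∞ (ibpRight A G i)
  | .inl p => contDiff_inv_mulVec_apply hA hAinv hG p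
  | .inr (p, q) => contDiff_inv_apply hA hAinv p q

theorem hasCompactSupport_ibpLeft {F : Euc d → Euc d} (hcF : HasCompactSupport F)
    (G : Euc d → Euc d) : ∀ i, HasCompactSupport (ibpLeft A F G i)
  | .inl _ => hcF.mono fun y hy hFy => hy (by simp [ibpLeft, hFy])
  | .inr _ => hcF.mono fun y hy hFy => hy (by simp [ibpLeft, hFy])

theorem dotProduct_Smat_LA_eq_sum (hA : ∀ i j, ContDiff ℝ ∞ fun x => A x i j)
    (hAinv : ∀ x, IsUnit (A x).det) (F : Euc d → Euc d) {G : Euc d → Euc d}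
    (hG : ContDiff ℝ ∞ G) (x : Euc d) :
    F x ⬝ᵥ (Smat A x *ᵥ LA V A G x) = ∑ i, ibpLeft A F G i x * Lop V (ibpRight A G i) x := by
  rw [dotProduct_Smat_mulVec, inv_mulVec_LA hA hAinv hG, dotProduct_sub, sub_eq_add_neg,
    Fintype.sum_sum_type, Fintype.sum_prod_type]
  congr 1
  simp only [ibpLeft, ibpRight, Sum.elim_inr, neg_mul, Finset.sum_neg_distrib, dotProduct,
    Matrix.mulVec, matL, Matrix.of_apply, Finset.mul_sum]
  congr 1
  exact Finset.sum_congr rfl fun p _ => Finset.sum_congr rfl fun q _ => by ring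

theorem sum_pd_dotProduct_Smat_pd_eq_sum (hA : ∀ i j, ContDiff ℝ ∞ fun x => A x i j)
    (hAinv : ∀ x, IsUnit (A x).det)
    (hsym : ∀ (x : Euc d) (k : Fin d),
      (((A x)⁻¹)ᵀ * Matrix.of fun i j => pd k (fun y => (A y)⁻¹ i j) x).IsSymm)
    {F G : Euc d → Euc d} (hF : ContDiff ℝ ∞ F) (hG : ContDiff ℝ ∞ G) (x : Euc d) :
    ∑ k, (fun i => pd k (fun y => F y i) x) ⬝ᵥ (Smat A x *ᵥ fun i => pd k (fun y => G y i) x)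
      = ∑ i, gradv (ibpLeft A F G i) x ⬝ᵥ gradv (ibpRight A G i) x := by
  have hprod (p q k : Fin d) : pd k (fun y => ((A y)⁻¹ *ᵥ F y) p * G y q) x
      = pd k (fun y => ((A y)⁻¹ *ᵥ F y) p) x * G x q
        + ((A x)⁻¹ *ᵥ F x) p * pd k (fun y => G y q) x :=
    pd_mul k ((contDiff_inv_mulVec_apply hA hAinv hF p).differentiable (by simp) x)
      (((contDiff_apply ℝ ℝ q).comp hG).differentiable (by simp) x)
  simp only [pd_dotProduct_Smat_pd hA hAinv hF hG x _ (hsym x _), Finset.sum_sub_distrib]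
  rw [Fintype.sum_sum_type, Fintype.sum_prod_type, sub_eq_add_neg]
  congr 1
  · exact Finset.sum_comm
  · simp only [ibpLeft, ibpRight, Sum.elim_inr, gradv, dotProduct, pd_neg, hprod, neg_mul,
      Finset.sum_neg_distrib]
    rw [Finset.sum_comm]
    exact congrArg _ (Finset.sum_congr rfl fun p _ => Finset.sum_comm)

theorem integral_exp_neg_mul_dotProduct_Smat_LA (hV : ContDiff ℝ ∞ V)
    (hA : ∀ i j, ContDiff ℝ ∞ fun x => A x i j) (hAinv : ∀ x, IsUnit (A x).det)
    (hsym : ∀ (x : Euc d) (k : Fin d),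
      (((A x)⁻¹)ᵀ * Matrix.of fun i j => pd k (fun y => (A y)⁻¹ i j) x).IsSymm)
    {F G : Euc d → Euc d} (hF : ContDiff ℝ ∞ F) (hcF : HasCompactSupport F)
    (hG : ContDiff ℝ ∞ G) :
    ∫ x, exp (-V x) * (F x ⬝ᵥ (Smat A x *ᵥ LA V A G x))
      = -∫ x, exp (-V x) * ∑ k, (fun i => pd k (fun y => F y i) x) ⬝ᵥ
          (Smat A x *ᵥ fun i => pd k (fun y => G y i) x) := by
  simp only [dotProduct_Smat_LA_eq_sum hA hAinv F hG,
    sum_pd_dotProduct_Smat_pd_eq_sum hA hAinv hsym hF hG]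
  exact integral_exp_neg_mul_sum_mul_Lop hV (contDiff_ibpLeft hA hAinv hF hG)
    (hasCompactSupport_ibpLeft hcF G) (contDiff_ibpRight hA hAinv hG)

theorem integral_gibbs (hV : Measurable V) (f : Euc d → ℝ) :
    ∫ x, f x ∂(gibbs V)
      = (ENNReal.ofReal (∫ x, exp (-V x)))⁻¹.toReal * ∫ x, exp (-V x) * f x := by
  rw [gibbs, integral_smul_measure, smul_eq_mul, integral_withDensity_eq_integral_toReal_smul
    (by fun_prop) (by simp)]
  simp [ENNReal.toReal_ofReal (exp_nonneg _)]

theorem integral_dotProduct_Smat_LA (hV : ContDiff ℝ ∞ V)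
    (hA : ∀ i j, ContDiff ℝ ∞ fun x => A x i j) (hAinv : ∀ x, IsUnit (A x).det)
    (hsym : ∀ (x : Euc d) (k : Fin d),
      (((A x)⁻¹)ᵀ * Matrix.of fun i j => pd k (fun y => (A y)⁻¹ i j) x).IsSymm)
    {F G : Euc d → Euc d} (hF : ContDiff ℝ ∞ F) (hcF : HasCompactSupport F)
    (hG : ContDiff ℝ ∞ G) :
    ∫ x, F x ⬝ᵥ (Smat A x *ᵥ LA V A G x) ∂(gibbs V)
      = -∫ x, ∑ k, (fun i => pd k (fun y => F y i) x) ⬝ᵥ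
          (Smat A x *ᵥ fun i => pd k (fun y => G y i) x) ∂(gibbs V) := by
  rw [integral_gibbs hV.continuous.measurable, integral_gibbs hV.continuous.measurable,
    integral_exp_neg_mul_dotProduct_Smat_LA hV hA hAinv hsym hF hcF hG, mul_neg]

end Symmetry

theorem stmt_2_general {d : ℕ} (V : Euc d → ℝ) (hV : ContDiff ℝ (⊤ : ℕ∞) V)
    (A : Euc d → Matrix (Fin d) (Fin d) ℝ)
    (hA : ∀ i j, ContDiff ℝ (⊤ : ℕ∞) fun x => A x i j)
    (hAinv : ∀ x, IsUnit (A x).det)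
    (hsym : ∀ (x : Euc d) (k : Fin d),
      (((A x)⁻¹)ᵀ * Matrix.of fun i j => pd k (fun y => (A y)⁻¹ i j) x).IsSymm) :
    (∀ F G : Euc d → Euc d,
      ContDiff ℝ (⊤ : ℕ∞) F → HasCompactSupport F →
      ContDiff ℝ (⊤ : ℕ∞) G → HasCompactSupport G →
      (∫ x, LA V A F x ⬝ᵥ (Smat A x *ᵥ G x) ∂(gibbs V))
          = (∫ x, F x ⬝ᵥ (Smat A x *ᵥ LA V A G x) ∂(gibbs V))
      ∧ (∫ x, F x ⬝ᵥ (Smat A x *ᵥ LA V A G x) ∂(gibbs V))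
          = - ∫ x, ∑ k, (fun i => pd k (fun y => F y i) x) ⬝ᵥ
              (Smat A x *ᵥ fun i => pd k (fun y => G y i) x) ∂(gibbs V))
    ∧ ∀ F : Euc d → Euc d, ContDiff ℝ (⊤ : ℕ∞) F → HasCompactSupport F →
        (∫ x, LA V A F x ⬝ᵥ (Smat A x *ᵥ F x) ∂(gibbs V)) ≤ 0 := by
  have key := @integral_dotProduct_Smat_LA d V A hV hA hAinv hsym
  have swap (F G : Euc d → Euc d) : ∫ x, LA V A F x ⬝ᵥ (Smat A x *ᵥ G x) ∂(gibbs V)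
      = ∫ x, G x ⬝ᵥ (Smat A x *ᵥ LA V A F x) ∂(gibbs V) :=
    integral_congr_ae (.of_forall fun x => dotProduct_Smat_comm A x _ _)
  refine ⟨fun F G hF hcF hG hcG => ⟨?_, key hF hcF hG⟩, fun F hF hcF => ?_⟩
  · rw [swap, key hG hcG hF, key hF hcF hG]
    exact congrArg _ (integral_congr_ae (.of_forall fun x =>
      Finset.sum_congr rfl fun k _ => dotProduct_Smat_comm A x _ _))
  · rw [swap, key hF hcF hF, neg_nonpos]
    exact integral_nonneg fun x => Finset.sum_nonneg fun k _ => dotProduct_Smat_self_nonneg A x _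

/-- symmetry and non-positivity of `𝕃_A` in `L²(S,μ)`. -/
theorem stmt_2 {d : ℕ} (hd : 1 ≤ d) (V : Euc d → ℝ) (hV : ContDiff ℝ (⊤ : ℕ∞) V)
    (hVint : Integrable fun x : Euc d => Real.exp (-V x))
    (A : Euc d → Matrix (Fin d) (Fin d) ℝ)
    (hA : ∀ i j, ContDiff ℝ (⊤ : ℕ∞) fun x => A x i j)
    (hAinv : ∀ x, IsUnit (A x).det)
    (hsym : ∀ (x : Euc d) (k : Fin d),
      (((A x)⁻¹)ᵀ * Matrix.of fun i j => pd k (fun y => (A y)⁻¹ i j) x).IsSymm) :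
    (∀ F G : Euc d → Euc d,
      ContDiff ℝ (⊤ : ℕ∞) F → HasCompactSupport F →
      ContDiff ℝ (⊤ : ℕ∞) G → HasCompactSupport G →
      (∫ x, LA V A F x ⬝ᵥ (Smat A x *ᵥ G x) ∂(gibbs V))
          = (∫ x, F x ⬝ᵥ (Smat A x *ᵥ LA V A G x) ∂(gibbs V))
      ∧ (∫ x, F x ⬝ᵥ (Smat A x *ᵥ LA V A G x) ∂(gibbs V))
          = - ∫ x, ∑ k, (fun i => pd k (fun y => F y i) x) ⬝ᵥ
              (Smat A x *ᵥ fun i => pd k (fun y => G y i) x) ∂(gibbs V))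
    ∧ ∀ F : Euc d → Euc d, ContDiff ℝ (⊤ : ℕ∞) F → HasCompactSupport F →
        (∫ x, LA V A F x ⬝ᵥ (Smat A x *ᵥ F x) ∂(gibbs V)) ≤ 0 :=
  stmt_2_general V hV A hA hAinv hsym
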